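/- For all integers a ≥ b ≥ 1, the rational number ∑_{l=a}^{a+b} ((-1)^{l-1}/l) · C(l,a) · C(a, a+b-l) equals 0. -/

import Mathlib

/-!
Substituting `l = a + k` and using `C(a + k, a) / (a + k) = C(a - 1 + k, k) / a`, the sum becomes
`(-1)^(a-1) / a` times `∑ₖ (-1)^k C(a - 1 + k, k) C(a, b - k)`. Since `(-1)^k C(a - 1 + k, k)` is the
generalized binomial coefficient `C(-a, k)`, the latter sum is `C(-a + a, b) = C(0, b) = 0` by
Chu–Vandermonde.
-/

open Finset

theorem Nat.cast_choose_succ_div_eq {K : Type*} [Field K] [CharZero K] (n k : ℕ) :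
    ((n + k + 1).choose (n + 1) : K) / (n + k + 1 : ℕ) = (n + k).choose k / (n + 1 : ℕ) := by
  have h := Nat.add_one_mul_choose_eq (n + k) n
  rw [Nat.choose_symm_add] at h
  rw [div_eq_div_iff (Nat.cast_ne_zero.mpr (by omega)) (Nat.cast_ne_zero.mpr (by omega))]
  exact_mod_cast h.symm.trans (mul_comm _ _)

theorem Int.sum_range_neg_one_pow_mul_choose_mul_choose (n b : ℕ) (hb : 0 < b) :
    ∑ k ∈ Finset.range (b + 1), (-1 : ℤ) ^ k * (n + k).choose k * (n + 1).choose (b - k) = 0 := by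
  have vandermonde := Ring.add_choose_eq (r := -((n + 1 : ℕ) : ℤ)) (s := ((n + 1 : ℕ) : ℤ)) b
    (Commute.all _ _)
  rw [neg_add_cancel, Ring.choose_zero_pos ℤ hb, Nat.sum_antidiagonal_eq_sum_range_succ_mk]
    at vandermonde
  rw [vandermonde]
  refine sum_congr rfl fun k _ => ?_
  rw [Ring.choose_neg, Ring.choose_natCast, Units.smul_def, Int.coe_negOnePow_natCast,
    show ((n + 1 : ℕ) : ℤ) + k - 1 = ((n + k : ℕ) : ℤ) by push_cast; ring, Ring.choose_natCast,
    smul_eq_mul]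

theorem stmt_2 (a b : ℕ) (hb : 1 ≤ b) (hab : b ≤ a) :
    ∑ l ∈ Finset.Icc a (a + b),
      (-1 : ℚ) ^ (l - 1) / l * (Nat.choose l a) * (Nat.choose a (a + b - l)) = 0 := by
  obtain ⟨n, rfl⟩ : ∃ n, a = n + 1 := Nat.exists_eq_add_one.mpr (by omega)
  rw [← Ico_add_one_right_eq_Icc, sum_Ico_eq_sum_range,
    show n + 1 + b + 1 - (n + 1) = b + 1 by omega]
  calc _ = ∑ k ∈ range (b + 1), (-1 : ℚ) ^ n / (n + 1 : ℕ) *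
        ((-1 : ℤ) ^ k * (n + k).choose k * (n + 1).choose (b - k) : ℤ) := by
        refine sum_congr rfl fun k _ => ?_
        rw [show n + 1 + k - 1 = n + k by omega, show n + 1 + b - (n + 1 + k) = b - k by omega,
          show n + 1 + k = n + k + 1 by omega, div_mul_eq_mul_div, mul_div_assoc,
          Nat.cast_choose_succ_div_eq]
        push_cast
        ring
    _ = 0 := by
        rw [← mul_sum, ← Int.cast_sum, Int.sum_range_neg_one_pow_mul_choose_mul_choose n b hb,
          Int.cast_zero, mul_zero]
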